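/- arXiv:1907.03967 — 4 statements merged into one kernel-verified Lean document; each statement's English description precedes it below -/
import Mathlib

section
/- For two distinct points p₁, p₂ ∈ ℝ³ with distinct third coordinates z₁ ≠ z₂, the intersection of the kernels of G(p₁) and G(p₂) (where G(p)(v,w) = v + w × p for (v,w) ∈ ℝ³ × ℝ³) is the one-dimensional span of the vector (−(p₂ × p₁)/(z₂ − z₁), (p₂ − p₁)/(z₂ − z₁)); equivalently, (v, w) satisfies v + w × p₁ = 0 and v + w × p₂ = 0 if and only if (v, w) is a scalar multiple of (−p₂ × p₁, p₂ − p₁). -/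
open Matrix

/-- for two points `p₁, p₂` with distinct third coordinates,
`(v, w)` lies in `ker G(p₁) ∩ ker G(p₂)` (i.e. `v + w × pᵢ = 0` for `i = 1,2`)
iff `(v, w)` is a scalar multiple of `(−p₂ × p₁, p₂ − p₁)`. -/
theorem kernel_rigidMap_two_points (p₁ p₂ : Fin 3 → ℝ) (hz : p₁ 2 ≠ p₂ 2) :
    ∀ v w : Fin 3 → ℝ,
      (v + crossProduct w p₁ = 0 ∧ v + crossProduct w p₂ = 0) ↔
      (∃ c : ℝ, v = c • (-(crossProduct p₂ p₁)) ∧ w = c • (p₂ - p₁)) := by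
  intro v w
  have hd : p₂ 2 - p₁ 2 ≠ 0 := sub_ne_zero.mpr (Ne.symm hz)
  constructor
  · rintro ⟨h1, h2⟩
    have e0 := congrFun h1 0
    have e1 := congrFun h1 1
    have e2 := congrFun h1 2
    have f0 := congrFun h2 0
    have f1 := congrFun h2 1
    have f2 := congrFun h2 2
    simp [cross_apply] at e0 e1 e2 f0 f1 f2
    refine ⟨w 2 / (p₂ 2 - p₁ 2), funext fun i => ?_, funext fun i => ?_⟩ <;>
      fin_cases i <;> simp [cross_apply] <;> field_simp
    · linear_combination (p₂ 2) * e0 - (p₁ 2) * f0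
    · linear_combination (p₂ 2) * e1 - (p₁ 2) * f1
    · linear_combination (p₂ 2 - p₁ 2) * e2 + p₁ 1 * f1 - p₁ 1 * e1 + p₁ 0 * f0 - p₁ 0 * e0
    · linear_combination e1 - f1
    · linear_combination f0 - e0
  · rintro ⟨c, rfl, rfl⟩
    constructor <;> funext i <;> fin_cases i <;> simp [cross_apply] <;> ring
end

section
/- (Exact recovery implies PKSP, contrapositive direction.) Let A : ℝ⁶ → ℝᵐ and B : ℝᵈ → ℝᵐ be linear maps with ker(A) = {0}, and let S ⊆ {1,...,d}. Suppose there exists ω ∈ ℝᵈ \ {0} with Bω ∈ range(A) and ‖ω_S‖₁ ≥ ‖ω_{S̄}‖₁ (where ω_S is the restriction of ω to indices in S extended by zero, and S̄ is the complement). Then there exist (ρ, x) ∈ ℝ⁶ × ℝᵈ with supp(x) ⊆ S, and (ρ', x') ∈ ℝ⁶ × ℝᵈ with x' ≠ x, such that Aρ + Bx = Aρ' + Bx' and ‖x'‖₁ ≤ ‖x‖₁. In other words, failure of the PKSP inequality relative to S implies that some S-supported vector x is not the unique ℓ¹-minimizer among all pairs consistent with the observation. -/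
open Finset

/-- if the PKSP inequality fails relative to `S` (some nonzero
`ω` with `Bω ∈ range A` has `‖ω_S‖₁ ≥ ‖ω_{S̄}‖₁`), then some `S`-supported
vector `x` is not the unique ℓ¹-minimizer among the pairs consistent with its
observation. -/
theorem pksp_failure_implies_nonrecovery {m d : ℕ}
    (A : (Fin 6 → ℝ) →ₗ[ℝ] (Fin m → ℝ)) (B : (Fin d → ℝ) →ₗ[ℝ] (Fin m → ℝ))
    (hA : LinearMap.ker A = ⊥) (S : Finset (Fin d))
    (ω : Fin d → ℝ) (hω : ω ≠ 0) (hrange : B ω ∈ LinearMap.range A)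
    (hineq : ∑ i ∈ Sᶜ, |ω i| ≤ ∑ i ∈ S, |ω i|) :
    ∃ (ρ : Fin 6 → ℝ) (x : Fin d → ℝ) (ρ' : Fin 6 → ℝ) (x' : Fin d → ℝ),
      (∀ i ∉ S, x i = 0) ∧ x' ≠ x ∧
      A ρ + B x = A ρ' + B x' ∧
      ∑ i, |x' i| ≤ ∑ i, |x i| := by
  obtain ⟨ρ₀, hρ₀⟩ := hrange
  set x : Fin d → ℝ := fun i => if i ∈ S then ω i else 0 with hx
  set x' : Fin d → ℝ := fun i => if i ∈ S then 0 else -ω i with hx'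
  have hdiff : x - x' = ω := by
    funext i
    simp only [hx, hx', Pi.sub_apply]
    by_cases h : i ∈ S <;> simp [h]
  refine ⟨0, x, ρ₀, x', ?_, ?_, ?_, ?_⟩
  · intro i hi; simp [hx, hi]
  · intro h
    apply hω
    rw [← hdiff, h, sub_self]
  · have : B x - B x' = A ρ₀ := by rw [← map_sub, hdiff, hρ₀]
    rw [map_zero, zero_add]
    linear_combination (norm := abel1) this
  · have h1 : ∑ i, |x' i| = ∑ i ∈ Sᶜ, |ω i| := by
      rw [← Finset.sum_subset (Finset.subset_univ Sᶜ)]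
      · refine Finset.sum_congr rfl fun i hi => ?_
        simp only [Finset.mem_compl] at hi
        simp [hx', hi]
      · intro i _ hi
        simp only [Finset.mem_compl, not_not] at hi
        simp [hx', hi]
    have h2 : ∑ i, |x i| = ∑ i ∈ S, |ω i| := by
      rw [← Finset.sum_subset (Finset.subset_univ S)]
      · refine Finset.sum_congr rfl fun i hi => by simp [hx, hi]
      · intro i _ hi; simp [hx, hi]
    rw [h1, h2]; exact hineq
end

section
/- (Null-space-property exact recovery, sufficiency.) Let A : ℝ⁶ → ℝᵐ and B : ℝᵈ → ℝᵐ be linear maps, and let S ⊆ {1,...,d}. Assume the PKSP relative to S: for every ω ∈ ℝᵈ \ {0} with Bω ∈ range(A), ‖ω_S‖₁ < ‖ω_{S̄}‖₁. Then for every (ρ, x) ∈ ℝ⁶ × ℝᵈ with supp(x) ⊆ S, the vector x is the unique minimizer of ‖x̃‖₁ over all (ρ̃, x̃) satisfying Aρ̃ + Bx̃ = Aρ + Bx. -/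
open Finset

/-- if the PKSP holds relative to `S` (every nonzero `ω` with
`Bω ∈ range A` satisfies `‖ω_S‖₁ < ‖ω_{S̄}‖₁`), then every `S`-supported `x`
is the unique ℓ¹-minimizer among all pairs `(ρ̃, x̃)` consistent with the
observation `Aρ + Bx`. -/
theorem pksp_implies_exact_recovery {m d : ℕ}
    (A : (Fin 6 → ℝ) →ₗ[ℝ] (Fin m → ℝ)) (B : (Fin d → ℝ) →ₗ[ℝ] (Fin m → ℝ))
    (S : Finset (Fin d))
    (hpksp : ∀ ω : Fin d → ℝ, ω ≠ 0 → B ω ∈ LinearMap.range A →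
      ∑ i ∈ S, |ω i| < ∑ i ∈ Sᶜ, |ω i|) :
    ∀ (ρ : Fin 6 → ℝ) (x : Fin d → ℝ), (∀ i ∉ S, x i = 0) →
      ∀ (ρ' : Fin 6 → ℝ) (x' : Fin d → ℝ),
        A ρ' + B x' = A ρ + B x → ∑ i, |x' i| ≤ ∑ i, |x i| → x' = x := by
  intro ρ x hsupp ρ' x' heq hle
  by_contra hne
  set ω : Fin d → ℝ := x - x' with hω
  have hωne : ω ≠ 0 := sub_ne_zero_of_ne (fun h => hne h.symm)
  have hrange : B ω ∈ LinearMap.range A := by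
    refine ⟨ρ' - ρ, ?_⟩
    have : A ρ' - A ρ = B x - B x' := by
      have := heq
      linear_combination this
    simp [hω, map_sub, this]
  have hkey := hpksp ω hωne hrange
  -- split sums over S and Sᶜ
  have hsplit : ∀ f : Fin d → ℝ, ∑ i, f i = ∑ i ∈ S, f i + ∑ i ∈ Sᶜ, f i := by
    intro f
    rw [Finset.sum_add_sum_compl]
  have hx : ∑ i, |x i| = ∑ i ∈ S, |x i| := by
    rw [hsplit]
    have : ∑ i ∈ Sᶜ, |x i| = 0 := by
      apply Finset.sum_eq_zero
      intro i hi
      simp [hsupp i (Finset.mem_compl.mp hi)]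
    simp [this]
  have hωc : ∀ i ∈ Sᶜ, |ω i| = |x' i| := by
    intro i hi
    simp [hω, hsupp i (Finset.mem_compl.mp hi), abs_sub_comm]
  have hx' : ∑ i, |x' i| = ∑ i ∈ S, |x' i| + ∑ i ∈ Sᶜ, |ω i| := by
    rw [hsplit]
    congr 1
    exact (Finset.sum_congr rfl hωc).symm
  have htri : ∑ i ∈ S, |x i| ≤ ∑ i ∈ S, |x' i| + ∑ i ∈ S, |ω i| := by
    rw [← Finset.sum_add_distrib]
    apply Finset.sum_le_sum
    intro i _
    calc |x i| = |x' i + ω i| := by simp [hω]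
    _ ≤ |x' i| + |ω i| := abs_add_le _ _
  have : ∑ i, |x i| < ∑ i, |x' i| := by
    rw [hx, hx']
    calc ∑ i ∈ S, |x i| ≤ ∑ i ∈ S, |x' i| + ∑ i ∈ S, |ω i| := htri
    _ < ∑ i ∈ S, |x' i| + ∑ i ∈ Sᶜ, |ω i| := by linarith
  linarith
end

section
/- (RF solution solves IF, Proposition 1.) Let A : ℝ⁶ → ℝᵐ and B : ℝᵈ → ℝᵐ be linear with ker(A) = {0}. Suppose the PKSP of order s holds: for every support set S of cardinality s and every ω ∈ ℝᵈ \ {0} with Bω ∈ range(A), ‖ω_S‖₁ < ‖ω_{S̄}‖₁. Let (ρ, x) ∈ ℝ⁶ × ℝᵈ with ‖x‖₀ ≤ s, and set y = Aρ + Bx. Then any minimizer (α, β) of ‖β̃‖₀ subject to Aρ̃ + Bβ̃ = y satisfies β = x and α = ρ. That is, the ℓ⁰-minimization problem has (ρ, x) as its unique solution. -/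
open Finset

/-- The ℓ⁰ "norm": the number of nonzero entries. -/
noncomputable def l0norm {d : ℕ} (v : Fin d → ℝ) : ℕ :=
  (Finset.univ.filter fun i => v i ≠ 0).card

/-- Key lemma: if `supp v ⊆ S`, `|S| = s`, and the PKSP inequality holds
for `ω = w - v`, then `‖v‖₁ < ‖w‖₁`. -/
lemma l1_lt {d : ℕ} (v w : Fin d → ℝ) (S : Finset (Fin d))
    (hsupp : ∀ i, v i ≠ 0 → i ∈ S)
    (hineq : ∑ i ∈ S, |w i - v i| < ∑ i ∈ Sᶜ, |w i - v i|) :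
    ∑ i, |v i| < ∑ i, |w i| := by
  have h1 : ∑ i, |v i| = ∑ i ∈ S, |v i| := by
    refine (Finset.sum_subset (Finset.subset_univ S) ?_).symm
    intro i _ hi
    have : v i = 0 := by by_contra h; exact hi (hsupp i h)
    simp [this]
  have h2 : ∑ i ∈ Sᶜ, |w i - v i| = ∑ i ∈ Sᶜ, |w i| := by
    refine Finset.sum_congr rfl fun i hi => ?_
    have : v i = 0 := by
      by_contra h; exact (Finset.mem_compl.mp hi) (hsupp i h)
    simp [this]
  have h3 : ∑ i ∈ S, |v i| ≤ ∑ i ∈ S, |w i| + ∑ i ∈ S, |w i - v i| := by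
    rw [← Finset.sum_add_distrib]
    refine Finset.sum_le_sum fun i _ => ?_
    have := abs_sub_abs_le_abs_sub (v i) (w i)
    have h4 : |v i - w i| = |w i - v i| := abs_sub_comm _ _
    linarith
  have h5 : ∑ i, |w i| = ∑ i ∈ S, |w i| + ∑ i ∈ Sᶜ, |w i| :=
    (Finset.sum_add_sum_compl S _).symm
  linarith [h2 ▸ hineq]

/-- Proposition 1: under the PKSP of order `s` and `ker A = {0}`,
if `y = Aρ + Bx` with `‖x‖₀ ≤ s`, then any minimizer `(α, β)` of the ℓ⁰
problem subject to `Aρ̃ + Bβ̃ = y` satisfies `β = x` and `α = ρ`. -/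
theorem rf_solution_solves_if {m d : ℕ}
    (A : (Fin 6 → ℝ) →ₗ[ℝ] (Fin m → ℝ)) (B : (Fin d → ℝ) →ₗ[ℝ] (Fin m → ℝ))
    (hA : LinearMap.ker A = ⊥) (s : ℕ) (hs : s ≤ d)
    (hpksp : ∀ S : Finset (Fin d), S.card = s →
      ∀ ω : Fin d → ℝ, ω ≠ 0 → B ω ∈ LinearMap.range A →
        ∑ i ∈ S, |ω i| < ∑ i ∈ Sᶜ, |ω i|)
    (ρ : Fin 6 → ℝ) (x : Fin d → ℝ) (hx : l0norm x ≤ s)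
    (α : Fin 6 → ℝ) (β : Fin d → ℝ)
    (hfeas : A α + B β = A ρ + B x)
    (hmin : ∀ (ρ' : Fin 6 → ℝ) (β' : Fin d → ℝ),
      A ρ' + B β' = A ρ + B x → l0norm β ≤ l0norm β') :
    β = x ∧ α = ρ := by
  have hβx : β = x := by
    by_contra hne
    have hω : (fun i => β i - x i) ≠ 0 := by
      intro h
      apply hne
      funext i
      have := congrFun h i
      simp at this
      linarith
    -- B(β - x) = A(ρ - α) ∈ range A
    have hrange : B (fun i => β i - x i) ∈ LinearMap.range A := by
      refine ⟨ρ - α, ?_⟩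
      have : B (β - x) = A ρ - A α := by
        rw [map_sub, sub_eq_sub_iff_add_eq_add, add_comm]
        exact hfeas
      calc A (ρ - α) = A ρ - A α := map_sub A ρ α
        _ = B (β - x) := this.symm
        _ = B (fun i => β i - x i) := rfl
    have hrange' : B (fun i => x i - β i) ∈ LinearMap.range A := by
      obtain ⟨u, hu⟩ := hrange
      refine ⟨-u, ?_⟩
      have : (fun i => x i - β i) = -(fun i => β i - x i) := by funext i; simp
      rw [this, map_neg, map_neg, hu]
    have hω' : (fun i => x i - β i) ≠ 0 := by
      intro h
      apply hω
      funext i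
      have := congrFun h i
      simp at this ⊢
      linarith
    -- β is also s-sparse
    have hβs : l0norm β ≤ s := le_trans (hmin ρ x (by ring)) hx
    -- extend supports to sets of card s
    have hcardx : (Finset.univ.filter fun i => x i ≠ 0).card ≤ s := hx
    have hcardβ : (Finset.univ.filter fun i => β i ≠ 0).card ≤ s := hβs
    obtain ⟨Sx, hSxsub, hSxcard⟩ := Finset.exists_superset_card_eq hcardx
      (by simpa using hs)
    obtain ⟨Sβ, hSβsub, hSβcard⟩ := Finset.exists_superset_card_eq hcardβ
      (by simpa using hs)
    have h1 : ∑ i, |x i| < ∑ i, |β i| :=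
      l1_lt x β Sx (fun i hi => hSxsub (by simp [hi]))
        (hpksp Sx hSxcard _ hω hrange)
    have h2 : ∑ i, |β i| < ∑ i, |x i| :=
      l1_lt β x Sβ (fun i hi => hSβsub (by simp [hi]))
        (hpksp Sβ hSβcard _ hω' hrange')
    linarith
  refine ⟨hβx, ?_⟩
  have : A α = A ρ := by
    rw [hβx] at hfeas
    have := add_right_cancel hfeas
    exact this
  exact LinearMap.ker_eq_bot.mp hA this
end
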